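/- arXiv:1112.1296 — 7 statements merged into one kernel-verified Lean document; each statement's English description precedes it below -/
import Mathlib

section
/- Let (X, d) be a connected and locally connected metric space, and let f, g : X → ℝ be continuous functions with values in [0,1] which have the same family of fibers, i.e., for all x, y ∈ X, f(x) = f(y) if and only if g(x) = g(y). If f is uniformly continuous, then g is uniformly continuous. -/
/-!
Since `f` and `g` have the same fibers, `g = φ ∘ f` for a bijection `φ : f(X) → g(X)` between
intervals, and the point is that `φ` is strictly monotone or antitone. Otherwise some
`f x < f y < f z` has, say, `g x, g z < c < g y`, and `c = g w`. Local connectedness puts the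
frontier of a component of `{g < c}` inside the level set `{g = c} = {f = f w}`, so the closure of
the component of `x` (or of `z`) is a connected subset of `{g ≤ c}` whose `f`-image is an interval
from `f x` (or `f z`) to `f w`; for one of the two choices it contains `f y`, contradicting
`g y > c`. A monotone `φ` onto a bounded interval is uniformly continuous: any two values of `g`
that are `ε` apart enclose two points of a finite `ε / 6`-net of `g(X)`, and only finitely many
`f`-gaps between net points have to be bounded below.
-/

open Set Filter Topology

def SameFibers {X α β : Type*} (f : X → α) (g : X → β) : Prop :=
  ∀ x y, f x = f y ↔ g x = g y

namespace SameFibers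

variable {X α β : Type*} {f : X → α} {g : X → β}

theorem symm (h : SameFibers f g) : SameFibers g f := fun x y => (h x y).symm

theorem ne (h : SameFibers f g) {x y : X} (hxy : f x ≠ f y) : g x ≠ g y :=
  fun h' => hxy ((h x y).mpr h')

theorem neg_right [InvolutiveNeg β] (h : SameFibers f g) : SameFibers f (-g) :=
  fun x y => (h x y).trans neg_inj.symm

section Order

variable [LinearOrder α] [LinearOrder β] (hfg : SameFibers f g)
  (hbtw : ∀ x y z, f x < f y → f y < f z → (g x < g y ∧ g y < g z) ∨ (g z < g y ∧ g y < g x))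
include hfg hbtw

theorem lt_iff_lt_of_lt_left {a b c : X} (hab : f a < f b) (hac : f a < f c) :
    g a < g b ↔ g a < g c := by
  wlog hbc : f b ≤ f c generalizing b c
  · exact (this hac hab (le_of_not_ge hbc)).symm
  rcases hbc.eq_or_lt with h | h
  · rw [(hfg b c).mp h]
  · rcases hbtw a b c hab h with h' | h'
    · exact iff_of_true h'.1 (h'.1.trans h'.2)
    · exact iff_of_false h'.2.asymm (h'.1.trans h'.2).asymm

theorem lt_iff_lt_of_lt_right {a b c : X} (hac : f a < f c) (hbc : f b < f c) :
    g a < g c ↔ g b < g c := by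
  wlog hab : f a ≤ f b generalizing a b
  · exact (this hbc hac (le_of_not_ge hab)).symm
  rcases hab.eq_or_lt with h | h
  · rw [(hfg a b).mp h]
  · rcases hbtw a b c h hbc with h' | h'
    · exact iff_of_true (h'.1.trans h'.2) h'.2
    · exact iff_of_false (h'.1.trans h'.2).asymm h'.1.asymm

theorem lt_iff_lt_of_lt_of_lt {p q x z : X} (hpq : f p < f q) (hxz : f x < f z) :
    g p < g q ↔ g x < g z := by
  obtain ⟨m, hqm, hzm⟩ : ∃ m, f q ≤ f m ∧ f z ≤ f m := by
    rcases le_total (f q) (f z) with h | h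
    exacts [⟨z, h, le_rfl⟩, ⟨q, le_rfl, h⟩]
  calc g p < g q ↔ g p < g m := hfg.lt_iff_lt_of_lt_left hbtw hpq (hpq.trans_le hqm)
    _ ↔ g x < g m := hfg.lt_iff_lt_of_lt_right hbtw (hpq.trans_le hqm) (hxz.trans_le hzm)
    _ ↔ g x < g z := (hfg.lt_iff_lt_of_lt_left hbtw hxz (hxz.trans_le hzm)).symm

theorem lt_imp_lt_or_lt_imp_gt :
    (∀ x y, f x < f y → g x < g y) ∨ (∀ x y, f x < f y → g y < g x) := by
  by_cases h : ∃ p q, f p < f q ∧ g p < g q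
  · obtain ⟨p, q, hpq, hgpq⟩ := h
    exact Or.inl fun x y hxy => (hfg.lt_iff_lt_of_lt_of_lt hbtw hpq hxy).mp hgpq
  · push Not at h
    exact Or.inr fun x y hxy => (h x y hxy).lt_of_ne (hfg.ne hxy.ne')

end Order

end SameFibers

theorem IsOpen.disjoint_frontier_connectedComponentIn {X : Type*} [TopologicalSpace X]
    [LocallyConnectedSpace X] {U : Set X} (hU : IsOpen U) (x : X) :
    Disjoint (frontier (connectedComponentIn U x)) U := by
  rw [disjoint_left]
  intro w hw hwU
  obtain ⟨u, huw, hux⟩ := mem_closure_iff.mp hw.1 _ hU.connectedComponentIn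
    (mem_connectedComponentIn hwU)
  have hwx : w ∈ connectedComponentIn U x :=
    (connectedComponentIn_eq hux).symm ▸ (connectedComponentIn_eq huw) ▸
      mem_connectedComponentIn hwU
  exact hw.2 (hU.connectedComponentIn.interior_eq.symm ▸ hwx)

theorem exists_isPreconnected_mem_le_of_lt_of_le {X α : Type*} [TopologicalSpace X]
    [PreconnectedSpace X] [LocallyConnectedSpace X] [LinearOrder α] [TopologicalSpace α]
    [OrderClosedTopology α] {g : X → α} (hg : Continuous g) {a y : X} {c : α}
    (ha : g a < c) (hy : c ≤ g y) :
    ∃ K : Set X, IsPreconnected K ∧ a ∈ K ∧ (∃ w ∈ K, g w = c) ∧ ∀ u ∈ K, g u ≤ c := by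
  have hU : IsOpen (g ⁻¹' Iio c) := isOpen_Iio.preimage hg
  set C := connectedComponentIn (g ⁻¹' Iio c) a
  have haC : a ∈ C := mem_connectedComponentIn ha
  have hCU : C ⊆ g ⁻¹' Iio c := connectedComponentIn_subset _ _
  have hle : closure C ⊆ g ⁻¹' Iic c :=
    closure_minimal (hCU.trans (preimage_mono Iio_subset_Iic_self)) (isClosed_Iic.preimage hg)
  obtain ⟨w, hw⟩ : (frontier C).Nonempty :=
    nonempty_frontier_iff.mpr ⟨⟨a, haC⟩, fun h => hy.not_gt (hCU (h ▸ mem_univ y))⟩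
  have hwU : w ∉ g ⁻¹' Iio c :=
    (hU.disjoint_frontier_connectedComponentIn a).notMem_of_mem_left hw
  exact ⟨closure C, isPreconnected_connectedComponentIn.closure, subset_closure haC,
    ⟨w, hw.1, (hle hw.1).antisymm (not_lt.mp hwU)⟩, hle⟩

namespace SameFibers

variable {X : Type*} [TopologicalSpace X] [PreconnectedSpace X] [LocallyConnectedSpace X]
  {f g : X → ℝ}

theorem notMem_uIcc (hfg : SameFibers f g) (hf : Continuous f) (hg : Continuous g)
    {a y w : X} {c : ℝ} (ha : g a < c) (hy : c < g y) (hw : g w = c) :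
    f y ∉ uIcc (f a) (f w) := by
  obtain ⟨K, hK, haK, ⟨w', hw'K, hw'⟩, hKc⟩ :=
    exists_isPreconnected_mem_le_of_lt_of_le hg ha hy.le
  have hfw' : f w' = f w := (hfg w' w).mpr (hw'.trans hw.symm)
  intro hyI
  obtain ⟨u, huK, hu⟩ := (hK.image f hf.continuousOn).ordConnected.uIcc_subset
    (mem_image_of_mem f haK) (mem_image_of_mem f hw'K) (hfw' ▸ hyI)
  linarith [hKc u huK, (hfg u y).mp hu]

theorem not_lt_and_lt (hfg : SameFibers f g) (hf : Continuous f) (hg : Continuous g)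
    {x y z : X} (hxy : f x < f y) (hyz : f y < f z) : ¬(g x < g y ∧ g z < g y) := by
  rintro ⟨hx, hz⟩
  obtain ⟨c, hc, hcy⟩ := exists_between (max_lt hx hz)
  obtain ⟨w, hw⟩ := intermediate_value_univ x y hg ⟨(le_max_left _ _).trans hc.le, hcy.le⟩
  have hwy : f w ≠ f y := fun h => hcy.ne (hw ▸ (hfg w y).mp h)
  rcases hwy.lt_or_gt with h | h
  · exact hfg.notMem_uIcc hf hg ((le_max_right _ _).trans_lt hc) hcy hw
      (mem_uIcc.mpr (Or.inr ⟨h.le, hyz.le⟩))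
  · exact hfg.notMem_uIcc hf hg ((le_max_left _ _).trans_lt hc) hcy hw
      (mem_uIcc.mpr (Or.inl ⟨hxy.le, h.le⟩))

theorem lt_and_lt_or_lt_and_lt (hfg : SameFibers f g) (hf : Continuous f) (hg : Continuous g)
    {x y z : X} (hxy : f x < f y) (hyz : f y < f z) :
    (g x < g y ∧ g y < g z) ∨ (g z < g y ∧ g y < g x) := by
  have hmax := hfg.not_lt_and_lt hf hg hxy hyz
  have hmin := hfg.neg_right.not_lt_and_lt hf hg.neg hxy hyz
  simp only [Pi.neg_apply, neg_lt_neg_iff] at hmin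
  rcases (hfg.ne hxy.ne).lt_or_gt with h₁ | h₁ <;>
    rcases (hfg.ne hyz.ne).lt_or_gt with h₂ | h₂ <;> tauto

theorem lt_imp_lt_or_lt_imp_gt_of_continuous (hfg : SameFibers f g) (hf : Continuous f)
    (hg : Continuous g) :
    (∀ x y, f x < f y → g x < g y) ∨ (∀ x y, f x < f y → g y < g x) :=
  hfg.lt_imp_lt_or_lt_imp_gt fun _ _ _ => hfg.lt_and_lt_or_lt_and_lt hf hg

end SameFibers

theorem exists_pos_lt_sub_of_le_sub {α : Type*} {f g : α → ℝ}
    (hfg : ∀ x y, g x < g y → f x < f y) (hconn : IsPreconnected (range g))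
    (hbdd : TotallyBounded (range g)) {ε : ℝ} (hε : 0 < ε) :
    ∃ δ > 0, ∀ x y, ε ≤ g y - g x → δ < f y - f x := by
  classical
  obtain ⟨t, htg, htfin, hcover⟩ :=
    Metric.finite_approx_of_totallyBounded hbdd (ε / 6) (by positivity)
  obtain ⟨s, -, hst⟩ := Finset.subset_set_image_iff.mp
    (show ↑htfin.toFinset ⊆ g '' univ by simpa [image_univ] using htg)
  have hδ : ∀ᶠ δ in 𝓝[>] (0 : ℝ), ∀ z ∈ s, ∀ z' ∈ s, g z < g z' → δ ≤ f z' - f z := by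
    simp only [eventually_all_finset]
    intro z _ z' _
    by_cases h : g z < g z'
    · filter_upwards [nhdsWithin_le_nhds (eventually_le_nhds (sub_pos.2 (hfg z z' h)))]
        with δ hδ using fun _ => hδ
    · exact Eventually.of_forall fun _ h' => absurd h' h
  obtain ⟨δ, hδs, hδpos⟩ := (hδ.and self_mem_nhdsWithin).exists
  refine ⟨δ, hδpos, fun x y hxy => ?_⟩
  have hnear : ∀ r ∈ Icc (g x) (g y), ∃ z ∈ s, |g z - r| < ε / 6 := by
    intro r hr
    obtain ⟨r', hr', hrr'⟩ := mem_iUnion₂.mp (hcover (hconn.Icc_subset ⟨x, rfl⟩ ⟨y, rfl⟩ hr))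
    obtain ⟨z, hz, rfl⟩ := Finset.mem_image.mp (hst ▸ htfin.mem_toFinset.mpr hr')
    exact ⟨z, hz, by rw [abs_sub_comm]; exact hrr'⟩
  obtain ⟨z₁, hz₁, h₁⟩ := hnear (g x + ε / 3) ⟨by linarith, by linarith⟩
  obtain ⟨z₂, hz₂, h₂⟩ := hnear (g x + 2 * ε / 3) ⟨by linarith, by linarith⟩
  rw [abs_lt] at h₁ h₂
  have hx₁ := hfg x z₁ (by linarith)
  have h₂y := hfg z₂ y (by linarith)
  have := hδs z₁ hz₁ z₂ hz₂ (by linarith)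
  linarith

theorem UniformContinuous.of_lt_imp_lt {α : Type*} [UniformSpace α] {f g : α → ℝ}
    (hf : UniformContinuous f) (hfg : ∀ x y, g x < g y → f x < f y)
    (hconn : IsPreconnected (range g)) (hbdd : TotallyBounded (range g)) :
    UniformContinuous g := by
  refine Metric.uniformity_basis_dist.tendsto_right_iff.mpr fun ε hε => ?_
  obtain ⟨δ, hδ, hfδ⟩ := exists_pos_lt_sub_of_le_sub hfg hconn hbdd hε
  filter_upwards [Metric.uniformity_basis_dist.tendsto_right_iff.mp hf δ hδ] with p hp
  simp only [Real.dist_eq, abs_sub_lt_iff] at hp ⊢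
  constructor <;> by_contra! h <;> linarith [hfδ _ _ h]

theorem stmt1_general {X : Type*} [MetricSpace X] [ConnectedSpace X] [LocallyConnectedSpace X]
    (f g : X → ℝ) (hg : Continuous g)
    (hgr : ∀ x, g x ∈ Set.Icc (0 : ℝ) 1)
    (hfib : ∀ x y : X, f x = f y ↔ g x = g y)
    (hufc : UniformContinuous f) : UniformContinuous g := by
  have hbdd : TotallyBounded (range g) :=
    (totallyBounded_Icc 0 1).subset (range_subset_iff.mpr hgr)
  rcases SameFibers.symm hfib |>.lt_imp_lt_or_lt_imp_gt_of_continuous hg hufc.continuous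
    with h | h
  · exact hufc.of_lt_imp_lt h (isPreconnected_range hg) hbdd
  · exact hufc.neg.of_lt_imp_lt (fun x y hxy => neg_lt_neg (h x y hxy))
      (isPreconnected_range hg) hbdd

/-- Let `X` be a connected and locally connected metric space and `f, g : X → [0,1]`
continuous functions with the same family of fibers. If `f` is uniformly continuous,
then so is `g`. -/
theorem stmt1 {X : Type*} [MetricSpace X] [ConnectedSpace X] [LocallyConnectedSpace X]
    (f g : X → ℝ) (hf : Continuous f) (hg : Continuous g)
    (hfr : ∀ x, f x ∈ Set.Icc (0 : ℝ) 1) (hgr : ∀ x, g x ∈ Set.Icc (0 : ℝ) 1)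
    (hfib : ∀ x y : X, f x = f y ↔ g x = g y)
    (hufc : UniformContinuous f) : UniformContinuous g :=
  stmt1_general f g hg hgr hfib hufc
end

section
/- Let X be a metric space and let f : X → ℝ be a continuous uniformly approachable (UA) function. Then f has distant connected components of fibers (DCF). -/
/-!
Apply uniform approachability with `K = {a₀, b₀}` and `M = A ∪ B`: the resulting uniformly
continuous `g` takes only the values `u, v` on `A ∪ B`, so by preconnectedness `g ≡ u` on `A`
and `g ≡ v` on `B`. Uniform continuity of `g` then keeps `A` and `B` apart.
-/

/-- A continuous `f : X → ℝ` is uniformly approachable (UA) if for every compact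
`K ⊆ X` and every `M ⊆ X` there is a uniformly continuous `g : X → ℝ` with `g = f`
on `K` and `g(M) ⊆ f(M)`. -/
def IsUA {X : Type*} [MetricSpace X] (f : X → ℝ) : Prop :=
  ∀ K : Set X, IsCompact K → ∀ M : Set X,
    ∃ g : X → ℝ, UniformContinuous g ∧ (∀ x ∈ K, g x = f x) ∧ g '' M ⊆ f '' M

/-- A function `f : X → ℝ` has distant connected components of fibers (DCF) if any two
nonempty connected subsets of distinct fibers are at positive distance. -/
def HasDCF {X : Type*} [MetricSpace X] (f : X → ℝ) : Prop :=
  ∀ u v : ℝ, u ≠ v → ∀ A B : Set X, A.Nonempty → B.Nonempty →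
    IsPreconnected A → IsPreconnected B → A ⊆ f ⁻¹' {u} → B ⊆ f ⁻¹' {v} →
    ∃ ε > (0 : ℝ), ∀ a ∈ A, ∀ b ∈ B, ε ≤ dist a b

open Set

theorem UniformContinuous.exists_pos_le_dist_of_eq_const {X Y : Type*} [PseudoMetricSpace X]
    [MetricSpace Y] {g : X → Y} (hg : UniformContinuous g) {A B : Set X} {u v : Y} (huv : u ≠ v)
    (hgA : ∀ a ∈ A, g a = u) (hgB : ∀ b ∈ B, g b = v) :
    ∃ ε > (0 : ℝ), ∀ a ∈ A, ∀ b ∈ B, ε ≤ dist a b := by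
  obtain ⟨δ, hδ, hgδ⟩ := Metric.uniformContinuous_iff.mp hg _ (dist_pos.mpr huv)
  refine ⟨δ, hδ, fun a ha b hb => not_lt.mp fun hab => ?_⟩
  have := hgδ hab
  rw [hgA a ha, hgB b hb] at this
  exact lt_irrefl _ this

theorem IsUA.exists_uniformContinuous_eq_on_subsets_of_fibers {X : Type*} [MetricSpace X]
    {f : X → ℝ} (hUA : IsUA f) {u v : ℝ} {A B : Set X} (hA : A.Nonempty) (hB : B.Nonempty)
    (hAc : IsPreconnected A) (hBc : IsPreconnected B) (hAu : A ⊆ f ⁻¹' {u})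
    (hBv : B ⊆ f ⁻¹' {v}) :
    ∃ g : X → ℝ, UniformContinuous g ∧ (∀ a ∈ A, g a = u) ∧ ∀ b ∈ B, g b = v := by
  obtain ⟨a₀, ha₀⟩ := hA
  obtain ⟨b₀, hb₀⟩ := hB
  obtain ⟨g, hg, hgK, hgM⟩ := hUA {a₀, b₀} (toFinite _).isCompact (A ∪ B)
  have hmaps : MapsTo g (A ∪ B) {u, v} := by
    intro x hx
    obtain ⟨y, hy | hy, hfy⟩ := hgM (mem_image_of_mem g hx)
    · exact Or.inl (hfy ▸ hAu hy)
    · exact Or.inr (hfy ▸ hBv hy)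
  have hconst : ∀ S ⊆ A ∪ B, IsPreconnected S → ∀ x₀ ∈ S, ∀ x ∈ S, g x = g x₀ :=
    fun S hS hSc x₀ hx₀ x hx => hSc.constant_of_mapsTo (toFinite _).isDiscrete
      hg.continuous.continuousOn (hmaps.mono_left hS) hx hx₀
  refine ⟨g, hg, fun a ha => ?_, fun b hb => ?_⟩
  · rw [hconst A subset_union_left hAc a₀ ha₀ a ha, hgK a₀ (by simp)]
    exact hAu ha₀
  · rw [hconst B subset_union_right hBc b₀ hb₀ b hb, hgK b₀ (by simp)]
    exact hBv hb₀

theorem stmt4_general {X : Type*} [MetricSpace X] (f : X → ℝ)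
    (hUA : IsUA f) : HasDCF f := by
  intro u v huv A B hA hB hAc hBc hAu hBv
  obtain ⟨g, hg, hgA, hgB⟩ :=
    hUA.exists_uniformContinuous_eq_on_subsets_of_fibers hA hB hAc hBc hAu hBv
  exact hg.exists_pos_le_dist_of_eq_const huv hgA hgB

/-- UA implies DCF for continuous real-valued functions on an arbitrary metric space. -/
theorem stmt4 {X : Type*} [MetricSpace X] (f : X → ℝ)
    (hf : Continuous f) (hUA : IsUA f) : HasDCF f :=
  stmt4_general f hUA
end

section
/- Let X be a locally connected metric space and let f : X → ℝ be a continuous TUA (truncation-UA) function. Then f has distant connected components of fibers (DCF). -/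
/-- `g` is a truncation of `f` if `g` is continuous and `g` is constant on every
connected component of the set `{x | g x ≠ f x}`. -/
def IsTruncation {X : Type*} [TopologicalSpace X] (f g : X → ℝ) : Prop :=
  Continuous g ∧ ∀ x : X, g x ≠ f x →
    ∀ y ∈ connectedComponentIn {z : X | g z ≠ f z} x, g y = g x

/-- A continuous `f : X → ℝ` is TUA (truncation-UA) if for every compact `K ⊆ X`
there is a uniformly continuous truncation `g` of `f` with `g = f` on `K`. -/
def IsTUA {X : Type*} [MetricSpace X] (f : X → ℝ) : Prop :=
  ∀ K : Set X, IsCompact K →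
    ∃ g : X → ℝ, IsTruncation f g ∧ UniformContinuous g ∧ ∀ x ∈ K, g x = f x

/-! Take the compact set `K = {a₀, b₀}` with `a₀ ∈ A`, `b₀ ∈ B` and a uniformly continuous
truncation `g` of `f` equal to `f` on `K`. A truncation that agrees with `f` at one point of a
preconnected piece of a fibre agrees with it on the whole piece, so `g = u` on `A` and `g = v`
on `B`, and uniform continuity of `g` keeps `A` and `B` apart. -/

open Set

theorem closure_connectedComponentIn_inter_subset {X : Type*} [TopologicalSpace X]
    (F : Set X) (x : X) : closure (connectedComponentIn F x) ∩ F ⊆ connectedComponentIn F x := by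
  by_cases hx : x ∈ F
  · have hpre : IsPreconnected (closure (connectedComponentIn F x) ∩ F) :=
      isPreconnected_connectedComponentIn.subset_closure
        (subset_inter subset_closure (connectedComponentIn_subset F x)) inter_subset_left
    exact hpre.subset_connectedComponentIn
      ⟨subset_closure (mem_connectedComponentIn hx), hx⟩ inter_subset_right
  · simp [connectedComponentIn_eq_empty hx]

theorem UniformContinuous.exists_pos_le_dist_of_subset_fibers {α β : Type*}
    [PseudoMetricSpace α] [MetricSpace β] {g : α → β} (hg : UniformContinuous g) {u v : β}
    (huv : u ≠ v) {A B : Set α} (hA : A ⊆ g ⁻¹' {u}) (hB : B ⊆ g ⁻¹' {v}) :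
    ∃ ε > (0 : ℝ), ∀ a ∈ A, ∀ b ∈ B, ε ≤ dist a b := by
  obtain ⟨ε, hε, hclose⟩ := Metric.uniformContinuous_iff.mp hg (dist u v) (dist_pos.2 huv)
  refine ⟨ε, hε, fun a ha b hb => not_lt.1 fun hab => (hclose hab).ne ?_⟩
  rw [hA ha, hB hb]

namespace IsTruncation

variable {X : Type*} [TopologicalSpace X] {f g : X → ℝ}

theorem eq_of_mem_closure_connectedComponentIn (hg : IsTruncation f g) {x y : X}
    (hy : y ∈ closure (connectedComponentIn {z | g z ≠ f z} x)) (hx : g x ≠ f x) :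
    g y = g x :=
  closure_minimal (hg.2 x hx) (isClosed_eq hg.1 continuous_const) hy

/-- The component `C` of `{g ≠ f}` through a point of `A` where `g ≠ u` is open, and `g` is
constant `≠ u` on its closure, so `A` cannot leave `C` through its frontier; hence `A ⊆ C`,
contradicting `g = u` at a point of `A`. -/
theorem subset_fiber_of_isPreconnected [LocallyConnectedSpace X] (hg : IsTruncation f g)
    (hf : Continuous f) {A : Set X} {u : ℝ} (hA : IsPreconnected A) (hAf : A ⊆ f ⁻¹' {u})
    {a₀ : X} (ha₀ : a₀ ∈ A) (hga₀ : g a₀ = u) : A ⊆ g ⁻¹' {u} := by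
  intro x hx
  show g x = u
  by_contra hgx
  have hxU : g x ≠ f x := by rwa [hAf hx]
  set C := connectedComponentIn {z | g z ≠ f z} x
  have hAC : A ⊆ C := by
    refine hA.subset_of_closure_inter_subset (isOpen_ne_fun hg.1 hf).connectedComponentIn
      ⟨x, hx, mem_connectedComponentIn hxU⟩ fun z ⟨hzC, hzA⟩ => ?_
    refine closure_connectedComponentIn_inter_subset _ x ⟨hzC, ?_⟩
    change g z ≠ f z
    rwa [hg.eq_of_mem_closure_connectedComponentIn hzC hxU, hAf hzA]
  have hga₀x := hg.eq_of_mem_closure_connectedComponentIn (subset_closure (hAC ha₀)) hxU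
  exact hgx (hga₀x ▸ hga₀)

end IsTruncation

/-- TUA implies DCF on every locally connected metric space. -/
theorem stmt6 {X : Type*} [MetricSpace X] [LocallyConnectedSpace X] (f : X → ℝ)
    (hf : Continuous f) (hTUA : IsTUA f) : HasDCF f := by
  intro u v huv A B ⟨a₀, ha₀⟩ ⟨b₀, hb₀⟩ hA hB hAf hBf
  obtain ⟨g, hg, hgu, hgf⟩ := hTUA {a₀, b₀} (toFinite _).isCompact
  have hAg := hg.subset_fiber_of_isPreconnected hf hA hAf ha₀
    ((hgf a₀ (by simp)).trans (hAf ha₀))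
  have hBg := hg.subset_fiber_of_isPreconnected hf hB hBf hb₀
    ((hgf b₀ (by simp)).trans (hBf hb₀))
  exact hgu.exists_pos_le_dist_of_subset_fibers huv hAg hBg
end

section
/- A metric space X is UC if and only if every bounded uniformly approachable continuous function f : X → ℝ is uniformly continuous. -/
open Metric Set Filter Function Topology

theorem exists_strictMono_pairwise_disjoint {α : Type*} {P : ℕ → Set α}
    (hfin : ∀ n, (P n).Finite) (hpt : ∀ a, {n | a ∈ P n}.Finite) :
    ∃ φ : ℕ → ℕ, StrictMono φ ∧ Pairwise (Disjoint on fun k => P (φ k)) := by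
  have hnext : ∀ s : Finset ℕ, ∃ n, ∀ m ∈ s, m < n ∧ Disjoint (P m) (P n) := by
    intro s
    have hbad : (⋃ m ∈ s, Iic m ∪ ⋃ a ∈ P m, {n | a ∈ P n}).Finite :=
      s.finite_toSet.biUnion fun m _ => (finite_Iic m).union ((hfin m).biUnion fun a _ => hpt a)
    obtain ⟨n, hn⟩ := hbad.exists_notMem
    refine ⟨n, fun m hm => ⟨not_le.1 fun h => hn (mem_biUnion hm (Or.inl h)), ?_⟩⟩
    exact disjoint_left.2 fun a ham han => hn (mem_biUnion hm (Or.inr (mem_biUnion ham han)))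
  obtain ⟨φ, -, hφ⟩ := exists_seq_of_forall_finset_exists (fun _ => True)
    (fun m n => m < n ∧ Disjoint (P m) (P n)) fun s _ => (hnext s).imp fun _ hn => ⟨trivial, hn⟩
  refine ⟨φ, fun j k h => (hφ j k h).1, fun j k hjk => ?_⟩
  rcases hjk.lt_or_gt with h | h
  · exact (hφ j k h).2
  · exact (hφ k j h).2.symm

section Sequences

variable {X Y : Type*} [PseudoMetricSpace X] [PseudoMetricSpace Y]

theorem not_uniformContinuous_iff_exists_seq {f : X → Y} :
    ¬UniformContinuous f ↔ ∃ ε > 0, ∃ x y : ℕ → X,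
      Tendsto (fun n => dist (x n) (y n)) atTop (𝓝 0) ∧ ∀ n, ε ≤ dist (f (x n)) (f (y n)) := by
  constructor
  · intro h
    rw [Metric.uniformContinuous_iff] at h
    push Not at h
    obtain ⟨ε, hε, h⟩ := h
    choose x y hxy hgap using fun n : ℕ => h (1 / (n + 1)) Nat.one_div_pos_of_nat
    exact ⟨ε, hε, x, y, squeeze_zero (fun _ => dist_nonneg) (fun n => (hxy n).le)
      tendsto_one_div_add_atTop_nhds_zero_nat, hgap⟩
  · rintro ⟨ε, hε, x, y, hxy, hgap⟩ h
    obtain ⟨δ, hδ, hf⟩ := Metric.uniformContinuous_iff.1 h ε hε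
    obtain ⟨n, hn⟩ := (hxy.eventually (gt_mem_nhds hδ)).exists
    exact (hgap n).not_gt (hf hn)

/-- Near a point `p` the values of `f` vary by less than `ε`, so a pair that meets a small ball
around `p` cannot be short. -/
theorem locallyFinite_pair_of_continuous {f : X → Y} (hf : Continuous f) {x y : ℕ → X}
    (hxy : Tendsto (fun n => dist (x n) (y n)) atTop (𝓝 0)) {ε : ℝ} (hε : 0 < ε)
    (hgap : ∀ n, ε ≤ dist (f (x n)) (f (y n))) :
    LocallyFinite fun n => ({x n, y n} : Set X) := by
  intro p
  obtain ⟨δ, hδ, hfδ⟩ := Metric.continuous_iff.1 hf p (ε / 2) (half_pos hε)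
  refine ⟨ball p (δ / 2), ball_mem_nhds p (half_pos hδ), ?_⟩
  have hshort : {n | ¬dist (x n) (y n) < δ / 2}.Finite := by
    rw [← eventually_cofinite, Nat.cofinite_eq_atTop]
    exact hxy.eventually (gt_mem_nhds (half_pos hδ))
  refine hshort.subset fun n ⟨z, hz, hzp⟩ hn => (hgap n).not_gt ?_
  have hnear : dist (x n) p < δ ∧ dist (y n) p < δ := by
    rw [mem_ball] at hzp
    rcases hz with rfl | rfl
    · exact ⟨by linarith, by linarith [dist_triangle_left (y n) p (x n)]⟩
    · exact ⟨by linarith [dist_triangle (x n) (y n) p], by linarith⟩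
  calc dist (f (x n)) (f (y n)) ≤ dist (f (x n)) (f p) + dist (f (y n)) (f p) :=
        dist_triangle_right _ _ _
    _ < ε / 2 + ε / 2 := add_lt_add (hfδ _ hnear.1) (hfδ _ hnear.2)
    _ = ε := add_halves ε

theorem exists_discrete_seq_of_not_uniformContinuous {f : X → Y} (hf : Continuous f)
    (hnu : ¬UniformContinuous f) :
    ∃ a b : ℕ → X, Tendsto (fun n => dist (a n) (b n)) atTop (𝓝 0) ∧
      LocallyFinite (fun n => ({a n, b n} : Set X)) ∧ Injective a ∧ ∀ k m, a k ≠ b m := by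
  obtain ⟨ε, hε, x, y, hxy, hgap⟩ := not_uniformContinuous_iff_exists_seq.1 hnu
  have hlf := locallyFinite_pair_of_continuous hf hxy hε hgap
  obtain ⟨φ, hφ, hdisj⟩ :=
    exists_strictMono_pairwise_disjoint (fun n => toFinite _) hlf.point_finite
  have hne : ∀ k m, x (φ k) ≠ y (φ m) := by
    intro k m h
    rcases eq_or_ne k m with rfl | hkm
    · exact (hgap (φ k)).not_gt (by rw [h, dist_self]; exact hε)
    · exact disjoint_left.1 (hdisj hkm) (mem_insert _ _) (h ▸ mem_insert_of_mem _ rfl)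
  refine ⟨x ∘ φ, y ∘ φ, hxy.comp hφ.tendsto_atTop, hlf.comp_injective hφ.injective,
    fun k m h => ?_, hne⟩
  by_contra hkm
  exact disjoint_left.1 (hdisj hkm) (mem_insert _ _)
    (by rw [show x (φ k) = x (φ m) from h]; exact mem_insert _ _)

theorem LocallyFinite.closedBall_of_tendsto_zero {ι : Type*} {a : ι → X} {r : ι → ℝ}
    (ha : LocallyFinite fun i => ({a i} : Set X)) (hr : Tendsto r cofinite (𝓝 0)) :
    LocallyFinite fun i => closedBall (a i) (r i) := by
  intro p
  obtain ⟨U, hU, hfin⟩ := ha p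
  obtain ⟨δ, hδ, hδU⟩ := Metric.mem_nhds_iff.1 hU
  refine ⟨ball p (δ / 2), ball_mem_nhds p (half_pos hδ), ?_⟩
  have hsmall : {i | ¬r i < δ / 2}.Finite :=
    eventually_cofinite.1 (hr.eventually (gt_mem_nhds (half_pos hδ)))
  refine (hfin.union hsmall).subset fun i ⟨z, hz, hzp⟩ => ?_
  by_cases hi : r i < δ / 2
  · refine Or.inl ⟨a i, rfl, hδU ?_⟩
    rw [mem_closedBall] at hz
    rw [mem_ball] at hzp ⊢
    linarith [dist_triangle_left (a i) p z]
  · exact Or.inr hi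

end Sequences

theorem uniformContinuous_finset_sum {ι α G : Type*} [UniformSpace α] [AddCommGroup G]
    [UniformSpace G] [IsUniformAddGroup G] (s : Finset ι) {g : ι → α → G}
    (hg : ∀ i ∈ s, UniformContinuous (g i)) : UniformContinuous fun x => ∑ i ∈ s, g i x := by
  classical
  induction s using Finset.induction_on with
  | empty => simpa using uniformContinuous_const
  | insert i s hi ih =>
    simp only [Finset.sum_insert hi]
    exact (hg i (Finset.mem_insert_self i s)).add
      (ih fun j hj => hg j (Finset.mem_insert_of_mem hj))

section Plateau

variable {X : Type*} [PseudoMetricSpace X]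

theorem exists_uniformContinuous_eqOn_zero_one {S T : Set X} {δ : ℝ} (hδ : 0 < δ)
    (hST : ∀ s ∈ S, ∀ t ∈ T, δ ≤ dist s t) :
    ∃ φ : X → ℝ, UniformContinuous φ ∧ EqOn φ 0 S ∧ EqOn φ 1 T := by
  rcases S.eq_empty_or_nonempty with rfl | hS
  · exact ⟨1, uniformContinuous_const, eqOn_empty _ _, eqOn_refl _ _⟩
  refine ⟨fun z => min 1 (infDist z S / δ),
    (LipschitzWith.const_min LipschitzWith.id 1).uniformContinuous.comp
      ((uniformContinuous_infDist_pt S).div_const' δ), fun s hs => ?_, fun t ht => ?_⟩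
  · simp [infDist_zero_of_mem hs]
  · refine min_eq_left ((one_le_div hδ).2 ((le_infDist hS).2 fun s hs => ?_))
    rw [dist_comm]
    exact hST s hs t ht

theorem IsCompact.exists_pos_le_dist {K T : Set X} (hK : IsCompact K) (hT : IsClosed T)
    (hKT : Disjoint K T) : ∃ δ > 0, ∀ x ∈ K, ∀ y ∈ T, δ ≤ dist x y := by
  obtain ⟨δ, hδ, h⟩ := exists_pos_forall_lt_edist hK hT hKT
  refine ⟨δ, hδ, fun x hx y hy => ?_⟩
  have := h x hx y hy
  rw [edist_nndist, ENNReal.coe_lt_coe] at this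
  exact_mod_cast this.le

theorem LocallyFinite.exists_pos_le_dist_of_isCompact {ι : Type*} {s : ι → Set X}
    (hs : LocallyFinite s) (hc : ∀ i, IsClosed (s i)) {K : Set X} (hK : IsCompact K) :
    ∃ δ > 0, ∀ i, Disjoint (s i) K → ∀ x ∈ K, ∀ y ∈ s i, δ ≤ dist x y := by
  have hT : IsClosed (⋃ i : {i // Disjoint (s i) K}, s i) :=
    (hs.comp_injective Subtype.val_injective).isClosed_iUnion fun i => hc i
  have hKT : Disjoint K (⋃ i : {i // Disjoint (s i) K}, s i) :=
    disjoint_iUnion_right.2 fun i => i.2.symm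
  obtain ⟨δ, hδ, h⟩ := hK.exists_pos_le_dist hT hKT
  exact ⟨δ, hδ, fun i hi x hx y hy => h x hx y (mem_iUnion.2 ⟨⟨i, hi⟩, hy⟩)⟩

end Plateau

section Tent

variable {X : Type*} [PseudoMetricSpace X]

noncomputable def tent (c : X) (r : ℝ) (z : X) : ℝ := max 0 (1 - dist z c / r)

theorem tent_nonneg (c : X) (r : ℝ) (z : X) : 0 ≤ tent c r z := le_max_left _ _

theorem tent_le_one (c : X) {r : ℝ} (hr : 0 ≤ r) (z : X) : tent c r z ≤ 1 :=
  max_le zero_le_one (sub_le_self _ (div_nonneg dist_nonneg hr))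

theorem tent_self (c : X) (r : ℝ) : tent c r c = 1 := by
  simp [tent]

theorem tent_eq_zero {c z : X} {r : ℝ} (hr : 0 < r) (h : r ≤ dist z c) : tent c r z = 0 :=
  max_eq_left (sub_nonpos.2 ((one_le_div hr).2 h))

theorem uniformContinuous_tent (c : X) (r : ℝ) : UniformContinuous (tent c r) :=
  (LipschitzWith.const_max LipschitzWith.id 0).uniformContinuous.comp
    (uniformContinuous_const.sub ((LipschitzWith.dist_left c).uniformContinuous.div_const' r))

noncomputable def tentSum {ι : Type*} (a : ι → X) (r : ι → ℝ) (z : X) : ℝ :=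
  ∑ᶠ i, tent (a i) (r i) z

variable {ι : Type*} {a : ι → X} {r : ι → ℝ}

theorem le_dist_of_mem_closedBall (hsep : Pairwise fun i j => 3 * r i ≤ dist (a i) (a j))
    {i j : ι} (hij : i ≠ j) {y z : X} (hy : y ∈ closedBall (a i) (r i))
    (hz : z ∈ closedBall (a j) (r j)) : r i ≤ dist y z := by
  have hi := hsep hij
  have hj := hsep hij.symm
  rw [mem_closedBall] at hy hz
  rw [dist_comm] at hj
  linarith [dist_triangle4 (a i) y z (a j), dist_comm y (a i)]

theorem tent_eq_zero_of_mem_closedBall (hr : ∀ i, 0 < r i)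
    (hsep : Pairwise fun i j => 3 * r i ≤ dist (a i) (a j)) {i j : ι} (hij : i ≠ j) {z : X}
    (hz : z ∈ closedBall (a j) (r j)) : tent (a i) (r i) z = 0 :=
  tent_eq_zero (hr i) <| by
    rw [dist_comm]
    exact le_dist_of_mem_closedBall hsep hij (mem_closedBall_self (hr i).le) hz

theorem tentSum_eq_tent (hr : ∀ i, 0 < r i)
    (hsep : Pairwise fun i j => 3 * r i ≤ dist (a i) (a j)) {i : ι} {z : X}
    (hz : z ∈ closedBall (a i) (r i)) : tentSum a r z = tent (a i) (r i) z :=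
  finsum_eq_single _ i fun _ hj => tent_eq_zero_of_mem_closedBall hr hsep hj hz

theorem tentSum_eq_zero (hr : ∀ i, 0 < r i) {z : X} (hz : ∀ i, r i ≤ dist z (a i)) :
    tentSum a r z = 0 :=
  finsum_eq_zero_of_forall_eq_zero fun i => tent_eq_zero (hr i) (hz i)

theorem support_tentSum_subset (hr : ∀ i, 0 < r i) :
    support (tentSum a r) ⊆ ⋃ i, closedBall (a i) (r i) := fun z hz => by
  by_contra h
  simp only [mem_iUnion, mem_closedBall, not_exists, not_le] at h
  exact hz (tentSum_eq_zero hr fun i => (h i).le)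

theorem tentSum_apply_center (hr : ∀ i, 0 < r i)
    (hsep : Pairwise fun i j => 3 * r i ≤ dist (a i) (a j)) (i : ι) : tentSum a r (a i) = 1 := by
  rw [tentSum_eq_tent hr hsep (mem_closedBall_self (hr i).le), tent_self]

theorem tentSum_mem_Icc (hr : ∀ i, 0 < r i)
    (hsep : Pairwise fun i j => 3 * r i ≤ dist (a i) (a j)) (z : X) :
    tentSum a r z ∈ Icc 0 1 := by
  by_cases hz : z ∈ support (tentSum a r)
  · obtain ⟨i, hi⟩ := mem_iUnion.1 (support_tentSum_subset hr hz)
    rw [tentSum_eq_tent hr hsep hi]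
    exact ⟨tent_nonneg _ _ _, tent_le_one _ (hr i).le _⟩
  · rw [notMem_support.1 hz]
    exact ⟨le_rfl, zero_le_one⟩

theorem continuous_tentSum (hr : ∀ i, 0 < r i)
    (hlf : LocallyFinite fun i => closedBall (a i) (r i)) : Continuous (tentSum a r) :=
  continuous_finsum (fun _ => (uniformContinuous_tent _ _).continuous) <|
    hlf.subset fun i _ hz => not_lt.1 fun h => hz (tent_eq_zero (hr i) h.le)

theorem indicator_tentSum_eq_sum (hr : ∀ i, 0 < r i)
    (hsep : Pairwise fun i j => 3 * r i ≤ dist (a i) (a j)) {F : Finset ι} {K : Set X}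
    (hK : ∀ i ∉ F, Disjoint (closedBall (a i) (r i)) K) :
    (K ∪ ⋃ i ∈ F, closedBall (a i) (r i)).indicator (tentSum a r) =
      fun z => ∑ i ∈ F, tent (a i) (r i) z := by
  funext z
  by_cases hz : z ∈ K ∪ ⋃ i ∈ F, closedBall (a i) (r i)
  · rw [indicator_of_mem hz]
    refine finsum_eq_sum_of_support_subset (fun i => tent (a i) (r i) z) fun i hi => ?_
    by_contra hiF
    refine hi ?_
    rcases hz with hzK | hzB
    · exact tent_eq_zero (hr i) (not_le.1 fun h => disjoint_left.1 (hK i hiF) h hzK).le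
    · obtain ⟨j, hj, hzj⟩ := mem_iUnion₂.1 hzB
      exact tent_eq_zero_of_mem_closedBall hr hsep (ne_of_mem_of_not_mem hj hiF).symm hzj
  · rw [indicator_of_notMem hz]
    exact (Finset.sum_eq_zero fun i hi =>
      tent_eq_zero (hr i) (not_le.1 fun h => hz (Or.inr (mem_biUnion hi h))).le).symm

end Tent

section Metric

variable {X : Type*} [MetricSpace X]

theorem isUA_of_forall_isCompact {f : X → ℝ}
    (h : ∀ K, IsCompact K → ∃ S, K ⊆ S ∧ UniformContinuous (S.indicator f) ∧
      ∃ δ > 0, ∀ s ∈ S, ∀ t ∈ support f \ S, δ ≤ dist s t) :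
    IsUA f := by
  intro K hK M
  obtain ⟨S, hKS, hSf, δ, hδ, hsep⟩ := h K hK
  obtain ⟨φ, hφ, hφS, hφT⟩ := exists_uniformContinuous_eqOn_zero_one hδ hsep
  -- `φ` takes uncontrolled values between `S` and the rest of the support, where `f` vanishes:
  -- scale it by `0` if `0 ∈ f '' M`, and by a value of `f` on `M` otherwise.
  obtain ⟨c, hc⟩ : ∃ c, ∀ m ∈ M, m ∉ S → c * φ m ∈ f '' M := by
    by_cases h0 : ∃ m ∈ M, f m = 0
    · obtain ⟨m₀, hm₀, hf0⟩ := h0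
      exact ⟨0, fun _ _ _ => ⟨m₀, hm₀, by rw [hf0, zero_mul]⟩⟩
    rcases M.eq_empty_or_nonempty with rfl | ⟨m₀, hm₀⟩
    · exact ⟨0, fun _ h => h.elim⟩
    push Not at h0
    refine ⟨f m₀, fun m hm hmS => ?_⟩
    rw [hφT ⟨h0 m hm, hmS⟩, Pi.one_apply, mul_one]
    exact mem_image_of_mem f hm₀
  refine ⟨fun z => S.indicator f z + c * φ z, hSf.add (hφ.const_mul' c), fun z hz => ?_, ?_⟩
  · dsimp only
    rw [indicator_of_mem (hKS hz), hφS (hKS hz), Pi.zero_apply, mul_zero, add_zero]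
  · rintro _ ⟨m, hm, rfl⟩
    dsimp only
    by_cases hmS : m ∈ S
    · rw [indicator_of_mem hmS, hφS hmS, Pi.zero_apply, mul_zero, add_zero]
      exact mem_image_of_mem f hm
    · rw [indicator_of_notMem hmS, zero_add]
      exact hc m hm hmS

theorem isUA_tentSum {ι : Type*} {a : ι → X} {r : ι → ℝ} (hr : ∀ i, 0 < r i)
    (hsep : Pairwise fun i j => 3 * r i ≤ dist (a i) (a j))
    (hlf : LocallyFinite fun i => closedBall (a i) (r i)) : IsUA (tentSum a r) := by
  refine isUA_of_forall_isCompact fun K hK => ?_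
  have hfin : {i | ¬Disjoint (closedBall (a i) (r i)) K}.Finite := by
    simpa only [not_disjoint_iff_nonempty_inter] using hlf.finite_nonempty_inter_compact hK
  set F := hfin.toFinset
  have hF : ∀ i ∉ F, Disjoint (closedBall (a i) (r i)) K := fun i hi =>
    not_not.1 fun h => hi (hfin.mem_toFinset.2 h)
  obtain ⟨δ₁, hδ₁, hKfar⟩ := hlf.exists_pos_le_dist_of_isCompact (fun _ => isClosed_closedBall) hK
  obtain ⟨δ₂, hδ₂r, hδ₂⟩ : ∃ δ, (∀ i ∈ F, δ ≤ r i) ∧ 0 < δ :=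
    (((eventually_all_finset F).2 fun i _ => nhdsWithin_le_nhds (eventually_le_nhds (hr i))).and
      (self_mem_nhdsWithin : Ioi (0 : ℝ) ∈ 𝓝[>] 0)).exists
  refine ⟨K ∪ ⋃ i ∈ F, closedBall (a i) (r i), subset_union_left, ?_, min δ₁ δ₂,
    lt_min hδ₁ hδ₂, ?_⟩
  · rw [indicator_tentSum_eq_sum hr hsep hF]
    exact uniformContinuous_finset_sum F fun i _ => uniformContinuous_tent _ _
  · rintro s hs t ⟨ht, htS⟩
    obtain ⟨j, hj⟩ := mem_iUnion.1 (support_tentSum_subset hr ht)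
    have hjF : j ∉ F := fun hjF => htS (Or.inr (mem_biUnion hjF hj))
    rcases hs with hs | hs
    · exact (min_le_left _ _).trans (hKfar j (hF j hjF) s hs t hj)
    · obtain ⟨i, hi, hsi⟩ := mem_iUnion₂.1 hs
      exact (min_le_right _ _).trans <| (hδ₂r i hi).trans <|
        le_dist_of_mem_closedBall hsep (ne_of_mem_of_not_mem hi hjF) hsi hj


theorem exists_separating_radii {a b : ℕ → X}
    (hlf : LocallyFinite fun m => ({a m, b m} : Set X)) (ha : Injective a)
    (hab : ∀ k m, a k ≠ b m) :
    ∃ r : ℕ → ℝ, (∀ k, 0 < r k) ∧ (∀ k m, r k ≤ dist (b m) (a k)) ∧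
      Pairwise fun j k => 3 * r j ≤ dist (a j) (a k) := by
  have hiso : ∀ k, ∃ η > 0, ∀ z ∈ ⋃ m, ({b m} ∪ ({a m} \ {a k})), η ≤ dist z (a k) := by
    intro k
    set S := ⋃ m, ({b m} ∪ ({a m} \ {a k}))
    have hS : IsClosed S :=
      (hlf.subset fun m => by rintro z (rfl | ⟨rfl, -⟩) <;> simp).isClosed_iUnion
        fun _ => (toFinite _).isClosed
    have hk : a k ∉ S := by simp [S, hab]
    obtain ⟨η, hη, hball⟩ := Metric.isOpen_iff.1 hS.isOpen_compl (a k) hk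
    exact ⟨η, hη, fun z hz => not_lt.1 fun h => hball (mem_ball.2 h) hz⟩
  choose η hη hfar using hiso
  refine ⟨fun k => η k / 3, fun k => div_pos (hη k) three_pos, fun k m => ?_, fun j k hjk => ?_⟩
  · exact (div_le_self (hη k).le (by norm_num)).trans (hfar k _ (mem_iUnion.2 ⟨m, Or.inl rfl⟩))
  · dsimp only
    rw [mul_div_cancel₀ _ three_ne_zero, dist_comm]
    exact hfar j _ (mem_iUnion.2 ⟨k, Or.inr ⟨rfl, ha.ne hjk.symm⟩⟩)

theorem exists_isUA_not_uniformContinuous {a b : ℕ → X}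
    (hab : Tendsto (fun n => dist (a n) (b n)) atTop (𝓝 0))
    (hlf : LocallyFinite fun n => ({a n, b n} : Set X)) (ha : Injective a)
    (hne : ∀ k m, a k ≠ b m) :
    ∃ f : X → ℝ, Continuous f ∧ Bornology.IsBounded (range f) ∧ IsUA f ∧
      ¬UniformContinuous f := by
  obtain ⟨r, hr, hrb, hsep⟩ := exists_separating_radii hlf ha hne
  have hballs : LocallyFinite fun k => closedBall (a k) (r k) := by
    refine (hlf.subset fun k => singleton_subset_iff.2 (mem_insert _ _)).closedBall_of_tendsto_zero
      ?_
    rw [Nat.cofinite_eq_atTop]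
    exact squeeze_zero (fun k => (hr k).le) (fun k => (hrb k k).trans_eq (dist_comm _ _)) hab
  refine ⟨tentSum a r, continuous_tentSum hr hballs,
    (isBounded_Icc 0 1).subset (range_subset_iff.2 (tentSum_mem_Icc hr hsep)),
    isUA_tentSum hr hsep hballs,
    not_uniformContinuous_iff_exists_seq.2 ⟨1, one_pos, a, b, hab, fun k => ?_⟩⟩
  rw [tentSum_apply_center hr hsep, tentSum_eq_zero hr fun i => hrb i k, Real.dist_eq]
  norm_num

end Metric

/-- A metric space is UC (every continuous real-valued function is uniformly
continuous) iff every bounded uniformly approachable continuous function is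
uniformly continuous. -/
theorem stmt7 {X : Type*} [MetricSpace X] :
    (∀ f : X → ℝ, Continuous f → UniformContinuous f) ↔
      (∀ f : X → ℝ, Continuous f → Bornology.IsBounded (Set.range f) → IsUA f →
        UniformContinuous f) := by
  refine ⟨fun h f hf _ _ => h f hf, fun h f hf => ?_⟩
  by_contra hnu
  obtain ⟨a, b, hab, hlf, ha, hne⟩ := exists_discrete_seq_of_not_uniformContinuous hf hnu
  obtain ⟨g, hg, hgb, hgua, hgnu⟩ := exists_isUA_not_uniformContinuous hab hlf ha hne
  exact hgnu (h g hg hgb hgua)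
end

section
/- Let X be a thin metric space and let A, B be disjoint closed uniformly connected subsets of X. Then A and B are at positive distance: there exists ε > 0 such that dist(a, b) ≥ ε for all a ∈ A and b ∈ B. -/
/-!
If `A` and `B` were not at positive distance, then inside `Y = A ∪ B` every set `U ∋ y` at
positive distance from `Y \ U` would contain all of `A` (uniform connectedness of `A`), then meet
`B` (as `A` comes arbitrarily close to `B`), and so contain all of `B`. Hence the uniform
quasi-component of a point of `A` in the closed set `A ∪ B` is `A ∪ B` itself, which thinness makes
connected; but it is split by the disjoint closed sets `A` and `B`.
-/

/-- The uniform quasi-component of `y` in `Y`: the intersection of all subsets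
`U ⊆ Y` containing `y` that are at positive distance from `Y \ U`. -/
def uniformQuasiComponent {X : Type*} [MetricSpace X] (Y : Set X) (y : X) : Set X :=
  ⋂₀ {U : Set X | U ⊆ Y ∧ y ∈ U ∧ ∃ ε > (0 : ℝ), ∀ u ∈ U, ∀ v ∈ Y \ U, ε ≤ dist u v}

/-- A metric space is thin if for every closed subset `Y` and every `y ∈ Y` the
uniform quasi-component of `y` in `Y` is connected. -/
def IsThin (X : Type*) [MetricSpace X] : Prop :=
  ∀ Y : Set X, IsClosed Y → ∀ y ∈ Y, IsConnected (uniformQuasiComponent Y y)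

/-- A subset `A` of a metric space is uniformly connected if it admits no partition
into two nonempty sets at positive distance. -/
def IsUniformlyConnectedSet {X : Type*} [MetricSpace X] (A : Set X) : Prop :=
  ¬ ∃ U V : Set X, U ∪ V = A ∧ U.Nonempty ∧ V.Nonempty ∧ Disjoint U V ∧
      ∃ ε > (0 : ℝ), ∀ u ∈ U, ∀ v ∈ V, ε ≤ dist u v

section

variable {X : Type*} [MetricSpace X]

theorem uniformQuasiComponent_eq_self {Y : Set X} {y : X} (hy : y ∈ Y)
    (h : ∀ U ⊆ Y, y ∈ U → (∃ ε > (0 : ℝ), ∀ u ∈ U, ∀ v ∈ Y \ U, ε ≤ dist u v) → Y ⊆ U) :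
    uniformQuasiComponent Y y = Y := by
  refine Set.Subset.antisymm (Set.sInter_subset_of_mem ?_) ?_
  · exact ⟨le_rfl, hy, 1, one_pos, fun _ _ v hv => (hv.2 hv.1).elim⟩
  rintro z hz U ⟨hUY, hyU, hsep⟩
  exact h U hUY hyU hsep hz

theorem IsUniformlyConnectedSet.subset_of_separated {A Y U : Set X}
    (hA : IsUniformlyConnectedSet A) (hAY : A ⊆ Y)
    (hsep : ∃ ε > (0 : ℝ), ∀ u ∈ U, ∀ v ∈ Y \ U, ε ≤ dist u v) (hAU : (A ∩ U).Nonempty) :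
    A ⊆ U := by
  by_contra hAU'
  obtain ⟨a, haA, haU⟩ := Set.not_subset.mp hAU'
  obtain ⟨ε, hε, hsep⟩ := hsep
  exact hA ⟨A ∩ U, A \ U, Set.inter_union_sdiff A U, hAU, ⟨a, haA, haU⟩,
    Set.disjoint_sdiff_inter.symm, ε, hε, fun u hu v hv => hsep u hu.2 v ⟨hAY hv.1, hv.2⟩⟩

theorem uniformQuasiComponent_union_eq_union {A B : Set X} {y : X}
    (hAu : IsUniformlyConnectedSet A) (hBu : IsUniformlyConnectedSet B) (hy : y ∈ A)
    (hclose : ∀ ε > (0 : ℝ), ∃ a ∈ A, ∃ b ∈ B, dist a b < ε) :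
    uniformQuasiComponent (A ∪ B) y = A ∪ B := by
  refine uniformQuasiComponent_eq_self (Or.inl hy) fun U _ hyU hsep => ?_
  have hAU : A ⊆ U := hAu.subset_of_separated Set.subset_union_left hsep ⟨y, hy, hyU⟩
  have hBU : (B ∩ U).Nonempty := by
    by_contra hBU
    obtain ⟨ε, hε, hsep⟩ := hsep
    obtain ⟨a, ha, b, hb, hab⟩ := hclose ε hε
    exact (hsep a (hAU ha) b ⟨Or.inr hb, fun hbU => hBU ⟨b, hb, hbU⟩⟩).not_gt hab
  exact Set.union_subset hAU (hBu.subset_of_separated Set.subset_union_right hsep hBU)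

end

/-- In a thin metric space, two disjoint closed uniformly connected subsets are at
positive distance. -/
theorem stmt10 {X : Type*} [MetricSpace X] (hthin : IsThin X)
    (A B : Set X) (hA : IsClosed A) (hB : IsClosed B) (hAB : Disjoint A B)
    (hAu : IsUniformlyConnectedSet A) (hBu : IsUniformlyConnectedSet B) :
    ∃ ε > (0 : ℝ), ∀ a ∈ A, ∀ b ∈ B, ε ≤ dist a b := by
  by_contra! hclose
  obtain ⟨y, hy, b, hb, -⟩ := hclose 1 one_pos
  have hconn := hthin (A ∪ B) (hA.union hB) y (Or.inl hy)
  rw [uniformQuasiComponent_union_eq_union hAu hBu hy hclose] at hconn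
  obtain ⟨x, -, hxA, hxB⟩ := isPreconnected_closed_iff.mp hconn.isPreconnected A B hA hB le_rfl
    ⟨y, Or.inl hy, hy⟩ ⟨b, Or.inr hb, hb⟩
  exact hAB.ne_of_mem hxA hxB rfl
end

section
/- Every UA metric space is thin: if X is a metric space such that every continuous function f : X → ℝ is uniformly approachable, then X is thin. -/
/-!
Let `Q` be the uniform quasi-component of `p` in a closed set `Y`; it is the intersection over
`ε > 0` of the sets of points reachable from `p` by `ε`-chains in `Y`, hence closed. Suppose
`Q ⊆ A ∪ B` with `A`, `B` disjoint and closed, `p ∈ A` and `b ∈ Q ∩ B`. Adjoin to `Q` the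
points of one finite `1/(n+1)`-chain from `p` to `b` for each `n`; the resulting set `T` is
still closed and differs from `A ∪ B` by a countable set. A Urysohn function for `A`, `B`
has a level `t` that misses this countable set, and cutting `T` at level `t` gives a continuous
`f` with `f(T) ⊆ {0, 1}`, `f p = 0` and `f b = 1`. A uniformly continuous `g` with
`g(T) ⊆ f(T)` agreeing with `f` at `p` and `b` is constant along fine enough chains in `T`,
which is absurd.
-/

open Metric Set Relation

def chainSet {X : Type*} [MetricSpace X] (Y : Set X) (p : X) (ε : ℝ) : Set X :=
  {z | ReflTransGen (fun a c => c ∈ Y ∧ dist a c < ε) p z}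

section Chains

variable {X : Type*} [MetricSpace X] {Y Y' U : Set X} {p u v z : X} {ε ε' : ℝ}

theorem self_mem_chainSet : p ∈ chainSet Y p ε := ReflTransGen.refl

theorem chainSet_subset (hp : p ∈ Y) : chainSet Y p ε ⊆ Y := fun _ hz =>
  (ReflTransGen.cases_tail hz).elim (fun h => h ▸ hp) fun ⟨_, _, hcz⟩ => hcz.1

theorem chainSet_mono (hY : Y ⊆ Y') (hε : ε ≤ ε') : chainSet Y p ε ⊆ chainSet Y' p ε' :=
  fun _ hz => ReflTransGen.mono (fun _ _ h => ⟨hY h.1, h.2.trans_le hε⟩) _ _ hz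

theorem le_dist_of_mem_chainSet (hu : u ∈ chainSet Y p ε) (hv : v ∈ Y \ chainSet Y p ε) :
    ε ≤ dist u v :=
  not_lt.1 fun h => hv.2 (ReflTransGen.tail hu ⟨hv.1, h⟩)

theorem chainSet_subset_of_le_dist (hpU : p ∈ U)
    (hU : ∀ u ∈ U, ∀ v ∈ Y \ U, ε ≤ dist u v) : chainSet Y p ε ⊆ U := by
  intro z hz
  induction hz with
  | refl => exact hpU
  | tail _ hcd ih =>
    by_contra hd
    exact (hU _ ih _ ⟨hcd.1, hd⟩).not_gt hcd.2

theorem exists_finite_subset_chainSet (hz : z ∈ chainSet Y p ε) :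
    ∃ F : Set X, F.Finite ∧ F ⊆ chainSet Y p ε ∧ z ∈ chainSet F p ε := by
  induction hz with
  | refl => exact ⟨∅, finite_empty, empty_subset _, self_mem_chainSet⟩
  | @tail c d hpc hcd ih =>
    obtain ⟨F, hF, hFY, hc⟩ := ih
    refine ⟨insert d F, hF.insert d, insert_subset (ReflTransGen.tail hpc hcd) hFY,
      ReflTransGen.tail (chainSet_mono (subset_insert d F) le_rfl hc) ⟨mem_insert d F, hcd.2⟩⟩

theorem isClosed_of_le_dist (hY : IsClosed Y) (hUY : U ⊆ Y) (hε : 0 < ε)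
    (hU : ∀ u ∈ U, ∀ v ∈ Y \ U, ε ≤ dist u v) : IsClosed U := by
  refine isClosed_of_closure_subset fun w hw => ?_
  obtain ⟨u, hu, hwu⟩ := Metric.mem_closure_iff.1 hw ε hε
  by_contra hwU
  refine (hU u hu w ⟨hY.closure_subset_iff.2 hUY hw, hwU⟩).not_gt ?_
  rwa [dist_comm]

theorem isClosed_chainSet (hY : IsClosed Y) (hp : p ∈ Y) (hε : 0 < ε) :
    IsClosed (chainSet Y p ε) :=
  isClosed_of_le_dist hY (chainSet_subset hp) hε fun _ hu _ hv => le_dist_of_mem_chainSet hu hv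

theorem mem_uniformQuasiComponent_self : p ∈ uniformQuasiComponent Y p :=
  fun _ hU => hU.2.1

theorem uniformQuasiComponent_eq_iInter_chainSet (hp : p ∈ Y) :
    uniformQuasiComponent Y p = ⋂ n : ℕ, chainSet Y p (1 / (n + 1)) := by
  ext z
  simp only [uniformQuasiComponent, mem_sInter, mem_iInter, mem_ofPred_eq]
  constructor
  · intro hz n
    exact hz _ ⟨chainSet_subset hp, self_mem_chainSet, _, Nat.one_div_pos_of_nat,
      fun _ hu _ hv => le_dist_of_mem_chainSet hu hv⟩
  · rintro hz U ⟨-, hpU, ε, hε, hU⟩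
    obtain ⟨n, hn⟩ := exists_nat_one_div_lt hε
    exact chainSet_subset_of_le_dist hpU (fun u hu v hv => hn.le.trans (hU u hu v hv)) (hz n)

theorem isClosed_uniformQuasiComponent (hY : IsClosed Y) (hp : p ∈ Y) :
    IsClosed (uniformQuasiComponent Y p) := by
  rw [uniformQuasiComponent_eq_iInter_chainSet hp]
  exact isClosed_iInter fun _ => isClosed_chainSet hY hp Nat.one_div_pos_of_nat

theorem UniformContinuous.eq_of_mem_uniformQuasiComponent {g : X → ℝ} (hg : UniformContinuous g)
    (hgY : MapsTo g Y {0, 1}) (hp : p ∈ Y) (hz : z ∈ uniformQuasiComponent Y p) :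
    g z = g p := by
  obtain ⟨δ, hδ, hgδ⟩ := Metric.uniformContinuous_iff.1 hg 1 one_pos
  refine (hz (Y ∩ g ⁻¹' {g p}) ⟨inter_subset_left, ⟨hp, rfl⟩, δ, hδ, ?_⟩).2
  rintro u ⟨huY, hu⟩ v ⟨hvY, hv⟩
  refine not_lt.1 fun huv => hv ⟨hvY, ?_⟩
  have hg1 := hgδ huv
  rw [mem_preimage, mem_singleton_iff] at hu ⊢
  rw [← hu]
  have hu01 : g u = 0 ∨ g u = 1 := hgY huY
  have hv01 : g v = 0 ∨ g v = 1 := hgY hvY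
  rcases hu01 with h | h <;> rcases hv01 with h' | h' <;>
    simp only [h, h', Real.dist_eq] at hg1 ⊢ <;> norm_num at hg1

end Chains

theorem closure_iUnion_subset_of_finite {X : Type*} [TopologicalSpace X] [T1Space X]
    {S C : ℕ → Set X} (hS : ∀ n, (S n).Finite) (hC : ∀ m, IsClosed (C m))
    (hSC : ∀ m n, m ≤ n → S n ⊆ C m) :
    closure (⋃ n, S n) ⊆ (⋃ n, S n) ∪ ⋂ m, C m := by
  refine fun w hw => or_iff_not_imp_left.2 fun hwS => mem_iInter.2 fun m => ?_
  have hsplit : ⋃ n, S n ⊆ (⋃ n ∈ Iio m, S n) ∪ C m := by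
    refine iUnion_subset fun n => ?_
    rcases lt_or_ge n m with hnm | hmn
    · exact (subset_biUnion_of_mem (u := S) (mem_Iio.2 hnm)).trans subset_union_left
    · exact (hSC m n hmn).trans subset_union_right
  have hfin : IsClosed (⋃ n ∈ Iio m, S n) := ((finite_Iio m).biUnion fun n _ => hS n).isClosed
  have hw' := closure_mono hsplit hw
  rw [closure_union, hfin.closure_eq, (hC m).closure_eq] at hw'
  exact hw'.resolve_left fun h => hwS (iUnion₂_subset_iUnion _ S h)

theorem exists_continuous_mapsTo_zero_one {X : Type*} [TopologicalSpace X] [NormalSpace X]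
    {A B T P : Set X} (hA : IsClosed A) (hB : IsClosed B) (hAB : Disjoint A B)
    (hT : IsClosed T) (hP : P.Countable) (hTP : T ⊆ A ∪ B ∪ P) :
    ∃ f : X → ℝ, Continuous f ∧ EqOn f 0 (T ∩ A) ∧ EqOn f 1 (T ∩ B) ∧
      MapsTo f T {0, 1} := by
  obtain ⟨φ, hφA, hφB, -⟩ := exists_continuous_zero_one_of_isClosed hA hB hAB
  obtain ⟨t, ht, ht0, ht1⟩ := ((hP.image φ).dense_compl ℝ).exists_between zero_lt_one
  have hT₀₁ : Disjoint (T ∩ φ ⁻¹' Iic t) (T ∩ φ ⁻¹' Ici t) := by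
    refine Set.disjoint_left.2 fun x ⟨hxT, hx₀⟩ ⟨_, hx₁⟩ => ?_
    have hφx : φ x = t := le_antisymm hx₀ hx₁
    rcases hTP hxT with (hxA | hxB) | hxP
    · exact ht0.ne' (hφx ▸ hφA hxA)
    · exact ht1.ne (hφx ▸ hφB hxB)
    · exact ht ⟨x, hxP, hφx⟩
  obtain ⟨f, hf₀, hf₁, -⟩ := exists_continuous_zero_one_of_isClosed
    (hT.inter (isClosed_Iic.preimage φ.continuous))
    (hT.inter (isClosed_Ici.preimage φ.continuous)) hT₀₁
  refine ⟨f, f.continuous, fun x hx => hf₀ ⟨hx.1, ?_⟩, fun x hx => hf₁ ⟨hx.1, ?_⟩,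
    fun x hx => ?_⟩
  · exact (hφA hx.2).trans_le ht0.le
  · exact ht1.le.trans (hφB hx.2).ge
  · rcases le_total (φ x) t with h | h
    · exact Or.inl (hf₀ ⟨hx, h⟩)
    · exact Or.inr (hf₁ ⟨hx, h⟩)

theorem uniformQuasiComponent_subset_of_forall_isUA {X : Type*} [MetricSpace X]
    (hUA : ∀ f : X → ℝ, Continuous f → IsUA f) {Y A B : Set X} {p : X} (hY : IsClosed Y)
    (hp : p ∈ Y) (hA : IsClosed A) (hB : IsClosed B) (hAB : Disjoint A B) (hpA : p ∈ A)
    (hQ : uniformQuasiComponent Y p ⊆ A ∪ B) :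
    uniformQuasiComponent Y p ⊆ A := by
  set Q := uniformQuasiComponent Y p
  intro b hbQ
  by_contra hbA
  have hbB : b ∈ B := (hQ hbQ).resolve_left hbA
  have hQ_eq := uniformQuasiComponent_eq_iInter_chainSet hp
  have hb : ∀ n : ℕ, b ∈ chainSet Y p (1 / (n + 1)) := mem_iInter.1 (hQ_eq ▸ hbQ)
  choose F hF hFY hbF using fun n => exists_finite_subset_chainSet (hb n)
  set T := Q ∪ ⋃ n, F n
  have hpT : p ∈ T := Or.inl mem_uniformQuasiComponent_self
  have hFC : ∀ m n, m ≤ n → F n ⊆ chainSet Y p (1 / (m + 1)) := fun m n hmn =>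
    (hFY n).trans (chainSet_mono subset_rfl (Nat.one_div_le_one_div hmn))
  have hT : IsClosed T := by
    refine isClosed_of_closure_subset ?_
    rw [closure_union, (isClosed_uniformQuasiComponent hY hp).closure_eq]
    refine union_subset subset_union_left ((closure_iUnion_subset_of_finite hF
      (fun _ => isClosed_chainSet hY hp Nat.one_div_pos_of_nat) hFC).trans ?_)
    rw [union_comm, ← hQ_eq]
  obtain ⟨f, hf, hfA, hfB, hfT⟩ := exists_continuous_mapsTo_zero_one hA hB hAB hT
    (countable_iUnion fun n => (hF n).countable) (union_subset_union_left _ hQ)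
  obtain ⟨g, hg, hgf, hgT⟩ := hUA f hf {p, b} (toFinite _).isCompact T
  have hgT01 : MapsTo g T {0, 1} := fun x hx => by
    obtain ⟨y, hy, hxy⟩ := hgT ⟨x, hx, rfl⟩
    exact hxy ▸ hfT hy
  have hbT : b ∈ uniformQuasiComponent T p := by
    rw [uniformQuasiComponent_eq_iInter_chainSet hpT]
    exact mem_iInter.2 fun n =>
      chainSet_mono ((subset_iUnion F n).trans subset_union_right) le_rfl (hbF n)
  have hgb := hg.eq_of_mem_uniformQuasiComponent hgT01 hpT hbT
  rw [hgf b (by simp), hgf p (by simp), hfB ⟨Or.inl hbQ, hbB⟩, hfA ⟨hpT, hpA⟩] at hgb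
  exact one_ne_zero hgb

/-- Every UA metric space is thin. -/
theorem stmt11 {X : Type*} [MetricSpace X]
    (hUA : ∀ f : X → ℝ, Continuous f → IsUA f) : IsThin X := by
  intro Y hY p hp
  have hpQ : p ∈ uniformQuasiComponent Y p := mem_uniformQuasiComponent_self
  refine ⟨⟨p, hpQ⟩, (isPreconnected_iff_subset_of_fully_disjoint_closed
    (isClosed_uniformQuasiComponent hY hp)).2 fun A B hA hB hQ hAB => ?_⟩
  rcases hQ hpQ with hpA | hpB
  · exact Or.inl (uniformQuasiComponent_subset_of_forall_isUA hUA hY hp hA hB hAB hpA hQ)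
  · exact Or.inr (uniformQuasiComponent_subset_of_forall_isUA hUA hY hp hB hA hAB.symm hpB
      (union_comm A B ▸ hQ))
end

section
/- Let X be a uniform space and let C⁺, C⁻ be closed subsets with X = C⁺ ∪ C⁻. Then the pair (C⁺, C⁻) is u-placed if and only if every continuous function f : X → ℝ whose restriction to C⁺ and restriction to C⁻ are both uniformly continuous is itself uniformly continuous. -/
/-! If `(C⁺, C⁻)` is u-placed, two close points `a ∈ C⁺`, `b ∈ C⁻` cannot both be far from
`C⁺ ∩ C⁻`, so one of them is close to some `z ∈ C⁺ ∩ C⁻`, and `z` relays the uniform continuity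
of `f` on one piece to the other. Conversely, if `C⁺_U` and `C⁻_U` are not distant, take a
uniformly continuous pseudometric whose small balls lie in `U` and glue its distance to
`C⁺ ∩ C⁻` on `C⁺` with `0` on `C⁻`: as the pieces are closed and cover `X`, this function is
continuous and uniformly continuous on each piece, but it takes values `≥ δ` and `0` at
arbitrarily close points. -/

/-- For an entourage `U`, the part of `C⁺` that is `U`-far from `C⁺ ∩ C⁻`. -/
def farPart {X : Type*} [UniformSpace X] (Cp Cm : Set X) (U : Set (X × X)) : Set X :=
  {x ∈ Cp | ∀ z ∈ Cp ∩ Cm, (z, x) ∉ U}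

/-- A pair `(C⁺, C⁻)` of closed sets is u-placed if for every entourage `U` the sets
`C⁺_U` and `C⁻_U` are distant, i.e. there is an entourage `V` with `(a, b) ∉ V` for
all `a ∈ C⁺_U` and `b ∈ C⁻_U`. -/
def UPlaced {X : Type*} [UniformSpace X] (Cp Cm : Set X) : Prop :=
  ∀ U ∈ uniformity X, ∃ V ∈ uniformity X,
    ∀ a ∈ farPart Cp Cm U, ∀ b ∈ farPart Cm Cp U, (a, b) ∉ V

open Filter Set Uniformity
open scoped SetRel

section Gluing

variable {X β : Type*} [UniformSpace X] {Cp Cm : Set X}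

lemma map_mem_comp_of_notMem_farPart {f : X → β} {U : SetRel X X} {R : SetRel β β}
    [U.IsRefl] [R.IsSymm]
    (hUp : ∀ x ∈ Cp, ∀ y ∈ Cp, (x, y) ∈ U ○ U → (f x, f y) ∈ R)
    (hUm : ∀ x ∈ Cm, ∀ y ∈ Cm, (x, y) ∈ U ○ U → (f x, f y) ∈ R)
    {a b : X} (ha : a ∈ Cp) (hb : b ∈ Cm) (hab : (a, b) ∈ U) (hnear : a ∉ farPart Cp Cm U) :
    (f a, f b) ∈ R ○ R := by
  obtain ⟨z, hzp, hzm, hza⟩ : ∃ z ∈ Cp, z ∈ Cm ∧ (z, a) ∈ U := by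
    simpa [farPart, ha] using hnear
  exact ⟨f z, R.symm (hUp z hzp a ha (SetRel.left_subset_comp hza)),
    hUm z hzm b hb ⟨a, hza, hab⟩⟩

theorem UPlaced.uniformContinuous [UniformSpace β] (h : UPlaced Cp Cm) (hcov : Cp ∪ Cm = univ)
    {f : X → β} (hfp : UniformContinuousOn f Cp) (hfm : UniformContinuousOn f Cm) :
    UniformContinuous f := by
  refine uniformContinuous_def.2 fun R hR => ?_
  obtain ⟨R', hR', _, hR'R⟩ := comp_symm_mem_uniformity_sets hR
  have : SetRel.IsRefl R' := isRefl_of_mem_uniformity hR'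
  have hS : {p : X × X | p ∈ Cp ×ˢ Cp → (f p.1, f p.2) ∈ R'} ∩
      {p | p ∈ Cm ×ˢ Cm → (f p.1, f p.2) ∈ R'} ∈ 𝓤 X :=
    inter_mem (mem_inf_principal.1 (hfp hR')) (mem_inf_principal.1 (hfm hR'))
  obtain ⟨U, hU, _, hUS⟩ := comp_symm_mem_uniformity_sets hS
  have : SetRel.IsRefl U := isRefl_of_mem_uniformity hU
  have hUp : ∀ x ∈ Cp, ∀ y ∈ Cp, (x, y) ∈ U ○ U → (f x, f y) ∈ R' :=
    fun x hx y hy hxy => (hUS hxy).1 ⟨hx, hy⟩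
  have hUm : ∀ x ∈ Cm, ∀ y ∈ Cm, (x, y) ∈ U ○ U → (f x, f y) ∈ R' :=
    fun x hx y hy hxy => (hUS hxy).2 ⟨hx, hy⟩
  obtain ⟨V, hV, hsep⟩ := h U hU
  have hmixed : ∀ a ∈ Cp, ∀ b ∈ Cm, (a, b) ∈ U ∩ V → (f a, f b) ∈ R' ○ R' := by
    intro a ha b hb ⟨habU, habV⟩
    by_cases hfar : a ∈ farPart Cp Cm U ∧ b ∈ farPart Cm Cp U
    · exact absurd habV (hsep a hfar.1 b hfar.2)
    rcases not_and_or.1 hfar with hna | hnb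
    · exact map_mem_comp_of_notMem_farPart hUp hUm ha hb habU hna
    · exact SetRel.symm _
        (map_mem_comp_of_notMem_farPart hUm hUp hb ha (SetRel.symm U habU) hnb)
  refine mem_of_superset (symmetrize_mem_uniformity (inter_mem hU hV)) fun ⟨x, y⟩ hxy => hR'R ?_
  replace hxy : (x, y) ∈ U ∩ V ∧ (y, x) ∈ U ∩ V := hxy
  rcases eq_univ_iff_forall.1 hcov x with hx | hx <;>
    rcases eq_univ_iff_forall.1 hcov y with hy | hy
  · exact SetRel.left_subset_comp (hUp x hx y hy (SetRel.left_subset_comp hxy.1.1))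
  · exact hmixed x hx y hy hxy.1
  · exact SetRel.symm _ (hmixed y hy x hx hxy.2)
  · exact SetRel.left_subset_comp (hUm x hx y hy (SetRel.left_subset_comp hxy.1.1))

end Gluing

section Separation

universe u

variable {X : Type u} [UniformSpace X]

lemma exists_seq_isSymm_comp_subset {U : SetRel X X} (hU : U ∈ 𝓤 X) :
    ∃ V : ℕ → SetRel X X, (∀ n, V n ∈ 𝓤 X) ∧ (∀ n, (V n).IsSymm) ∧ V 0 ⊆ U ∧
      ∀ n, V (n + 1) ○ V (n + 1) ⊆ V n := by
  choose! W hW hWsymm hWcomp using fun s (hs : s ∈ 𝓤 X) => comp_symm_mem_uniformity_sets hs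
  have hmem : ∀ n, W^[n] U ∈ 𝓤 X := by
    intro n
    induction n with
    | zero => exact hU
    | succ n ih => rw [Function.iterate_succ_apply']; exact hW _ ih
  refine ⟨fun n => W (W^[n] U), fun n => hW _ (hmem n), fun n => hWsymm _ (hmem n),
    (subset_comp_self_of_mem_uniformity (hW U hU)).trans (hWcomp U hU), fun n => ?_⟩
  simp only [Function.iterate_succ_apply']
  exact hWcomp _ (hW _ (hmem n))

theorem exists_uniformContinuous_pseudoMetricSpace_of_mem_uniformity {U : SetRel X X}
    (hU : U ∈ 𝓤 X) :
    ∃ (Y : Type u) (_ : PseudoMetricSpace Y) (φ : X → Y), UniformContinuous φ ∧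
      ∃ ε > 0, ∀ x y, dist (φ x) (φ y) < ε → (x, y) ∈ U := by
  obtain ⟨V, hV, hVsymm, hVU, hVcomp⟩ := exists_seq_isSymm_comp_subset hU
  -- The coarser uniformity with basis `V n` is countably generated, hence pseudometrizable.
  have hB : (⨅ n, 𝓟 (V n)).HasAntitoneBasis V := .iInf_principal <| antitone_nat_of_succ_le
    fun n => (subset_comp_self_of_mem_uniformity (hV _)).trans (hVcomp n)
  let core : UniformSpace.Core X := .mk' (⨅ n, 𝓟 (V n))
    (fun r hr x => let ⟨n, hn⟩ := hB.mem_iff.1 hr; hn (refl_mem_uniformity (hV n)))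
    (fun r hr => let ⟨n, hn⟩ := hB.mem_iff.1 hr
      mem_of_superset (hB.mem n) fun p hp => hn (SetRel.symm (V n) hp))
    (fun r hr => let ⟨n, hn⟩ := hB.mem_iff.1 hr
      ⟨V (n + 1), hB.mem _, (hVcomp n).trans hn⟩)
  have : IsCountablyGenerated (@uniformity X (.ofCore core)) := hB.isCountablyGenerated
  obtain ⟨I, hI⟩ := @UniformSpace.metrizable_uniformity X (.ofCore core) this
  have hle : 𝓤 X ≤ @uniformity X I.toUniformSpace := by
    rw [hI]
    exact le_iInf fun n => le_principal_iff.2 (hV n)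
  have hUI : U ∈ @uniformity X I.toUniformSpace := by
    rw [hI]
    exact mem_of_superset (hB.mem 0) hVU
  exact ⟨X, I, id, hle, @Metric.mem_uniformity_dist X I U |>.1 hUI⟩

theorem exists_uniformContinuous_eqOn_zero_of_mem_uniformity {U : SetRel X X} (hU : U ∈ 𝓤 X)
    (D : Set X) : ∃ g : X → ℝ, UniformContinuous g ∧ EqOn g 0 D ∧
      ∃ δ > 0, ∀ x, (∀ z ∈ D, (z, x) ∉ U) → δ ≤ g x := by
  obtain ⟨Y, _, φ, hφ, ε, hε, hεU⟩ :=
    exists_uniformContinuous_pseudoMetricSpace_of_mem_uniformity hU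
  rcases D.eq_empty_or_nonempty with rfl | hD
  · exact ⟨fun _ => 1, uniformContinuous_const, eqOn_empty _ _, 1, one_pos, fun _ _ => le_rfl⟩
  refine ⟨fun x => Metric.infDist (φ x) (φ '' D), (Metric.uniformContinuous_infDist_pt _).comp hφ,
    fun x hx => Metric.infDist_zero_of_mem (mem_image_of_mem φ hx), ε, hε, fun x hx => ?_⟩
  refine (Metric.le_infDist (hD.image φ)).2 ?_
  rintro _ ⟨z, hz, rfl⟩
  rw [dist_comm]
  exact not_lt.1 fun h => hx z hz (hεU z x h)

end Separation

theorem uPlaced_of_forall_uniformContinuous {X : Type*} [UniformSpace X] {Cp Cm : Set X}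
    (hp : IsClosed Cp) (hm : IsClosed Cm) (hcov : Cp ∪ Cm = univ)
    (H : ∀ f : X → ℝ, Continuous f → UniformContinuousOn f Cp → UniformContinuousOn f Cm →
      UniformContinuous f) :
    UPlaced Cp Cm := by
  intro U hU
  by_contra! hn
  obtain ⟨g, hg, hgD, δ, hδ, hgfar⟩ :=
    exists_uniformContinuous_eqOn_zero_of_mem_uniformity hU (Cp ∩ Cm)
  classical
  set f : X → ℝ := Cm.piecewise 0 g
  have hfm : EqOn f 0 Cm := Cm.piecewise_eqOn _ _
  have hfp : EqOn f g Cp := fun x hx => by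
    by_cases hxm : x ∈ Cm
    · rw [hfm hxm, hgD ⟨hx, hxm⟩]
    · exact Cm.piecewise_eq_of_notMem _ _ hxm
  have hf : Continuous f := by
    rw [← continuousOn_univ, ← hcov]
    exact (hg.continuous.continuousOn.congr hfp).union_of_isClosed
      (continuousOn_const.congr hfm) hp hm
  obtain ⟨a, ha, b, hb, hab⟩ := hn _ (H f hf (hg.uniformContinuousOn.congr hfp.symm)
    (uniformContinuous_const.uniformContinuousOn.congr hfm.symm) (Metric.dist_mem_uniformity hδ))
  replace hab : dist (f a) (f b) < δ := hab
  rw [hfm hb.1, hfp ha.1, Pi.zero_apply, Real.dist_eq, sub_zero] at hab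
  exact (hgfar a ha.2).not_gt ((le_abs_self _).trans_lt hab)

/-- For a uniform space `X` covered by two closed sets `C⁺`, `C⁻`, the pair is
u-placed iff every continuous real-valued function on `X` which is uniformly
continuous on `C⁺` and on `C⁻` is uniformly continuous. -/
theorem stmt14 {X : Type*} [UniformSpace X] (Cp Cm : Set X)
    (hp : IsClosed Cp) (hm : IsClosed Cm) (hcov : Cp ∪ Cm = Set.univ) :
    UPlaced Cp Cm ↔
      ∀ f : X → ℝ, Continuous f → UniformContinuousOn f Cp →
        UniformContinuousOn f Cm → UniformContinuous f :=
  ⟨fun h _ _ hfp hfm => h.uniformContinuous hcov hfp hfm,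
    uPlaced_of_forall_uniformContinuous hp hm hcov⟩
end
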